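/- Define g : [0, π) → [0, π) by g(z) = arccos( ((π − z) cos z + sin z)/π ), let g^l be the l-fold iterate of g (g^0 = identity), and for an integer L ≥ 0 define F_L(θ) = (1/(L+1)) Σ_{l=0}^{L} [ cos(g^l(θ)) · Π_{l'=l}^{L−1} (1 − g^{l'}(θ)/π) ] (empty product equal to 1). Let x_1, x_2 ∈ ℝ^d be nonzero, set a = ‖x_1‖², b = ‖x_2‖², and for θ ∈ (0, π) let G(θ) be the 2×2 symmetric matrix with diagonal a, b and off-diagonal √(ab)·cos θ, and let K_L(θ) be the 2×2 symmetric matrix with diagonal a, b and off-diagonal √(ab)·F_L(θ). Then for all integers L_1 > L_2 ≥ 1 there exists δ > 0 such that for every θ ∈ (0, δ): the matrices G(θ), K_{L_2}(θ), K_{L_1}(θ) are positive definite, and their condition numbers satisfy κ(K_{L_1}(θ)) < κ(K_{L_2}(θ)) < κ(G(θ)). Moreover, for each L ≥ 1 and θ ∈ (0, δ), the eigenvalues interlace as λ_max(G(θ)) > λ_max(K_L(θ)) ≥ λ_min(K_L(θ)) > λ_min(G(θ)). -/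

import Mathlib

/-!
`F L 0 = 1`, and `F L` has right derivative `-L / (2π)` at `0`: the squeeze `z - z² ≤ g z ≤ z`
gives `g` right derivative `1` at its fixed point `0`, so to first order the `l`-th term of `F L`
is `1 - (L - l) θ / π`. Hence for small `θ > 0` the correlations are ordered
`0 < F L₁ θ < F L₂ θ < F 0 θ = cos θ < 1`. The eigenvalues of `!![a, c; c, b]` are
`(a + b ± √((a - b)² + 4 c²)) / 2`, so the largest one grows, the smallest one shrinks and the
condition number grows with `c²`.
-/

/-- The layer-to-layer embedding-angle map of an infinitely wide ReLU network:
`g z = arccos(((π − z) cos z + sin z)/π)`. -/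
noncomputable def g (z : ℝ) : ℝ :=
  Real.arccos (((Real.pi - z) * Real.cos z + Real.sin z) / Real.pi)

/-- The cosine of the model-gradient angle of an infinitely wide depth-`L` ReLU network
(Theorem 4.3 of the paper):
`F L θ = (1/(L+1)) ∑_{l=0}^{L} cos (g^[l] θ) ∏_{l'=l}^{L−1} (1 − g^[l'] θ / π)`,
with the empty product equal to `1`. -/
noncomputable def F (L : ℕ) (θ : ℝ) : ℝ :=
  (1 / ((L : ℝ) + 1)) * ∑ l ∈ Finset.range (L + 1),
    Real.cos (g^[l] θ) * ∏ l' ∈ Finset.Ico l L, (1 - g^[l'] θ / Real.pi)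

open Real Set Filter Topology Matrix

lemma Real.mul_cos_le_sin {z : ℝ} (h0 : 0 ≤ z) (hπ : z ≤ π) : z * cos z ≤ sin z := by
  rcases h0.eq_or_lt with rfl | h0
  · simp
  rcases lt_or_ge z (π / 2) with hz | hz
  · have hcos : 0 < cos z := cos_pos_of_mem_Ioo ⟨by linarith, hz⟩
    have htan := lt_tan h0 hz
    rw [tan_eq_sin_div_cos, lt_div_iff₀ hcos] at htan
    exact htan.le
  · have hcos : cos z ≤ 0 := cos_nonpos_of_pi_div_two_le_of_le hz (by linarith)
    nlinarith [sin_nonneg_of_nonneg_of_le_pi h0.le hπ]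

lemma Real.two_mul_one_sub_le_arccos_sq {y : ℝ} (hy : -1 ≤ y) : 2 * (1 - y) ≤ arccos y ^ 2 := by
  rcases le_or_gt y 1 with hy1 | hy1
  · nlinarith [one_sub_sq_div_two_le_cos (x := arccos y), cos_arccos hy hy1]
  · nlinarith [sq_nonneg (arccos y)]

lemma Finset.sum_range_succ_card_Ico (L : ℕ) :
    (∑ l ∈ range (L + 1), (Ico l L).card) * 2 = L * (L + 1) := by
  have hreflect := sum_range_reflect (fun l => l) (L + 1)
  simp only [add_tsub_cancel_right] at hreflect
  simp only [Nat.card_Ico]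
  rw [hreflect, sum_range_id_mul_two, add_tsub_cancel_right, mul_comm]

lemma HasDerivWithinAt.eventually_nhdsGT_lt {f : ℝ → ℝ} {f' x : ℝ}
    (hf : HasDerivWithinAt f f' (Ici x) x) (hf' : 0 < f') : ∀ᶠ y in 𝓝[>] x, f x < f y := by
  have hslope := (hasDerivWithinAt_iff_tendsto_slope' (lt_irrefl x)).1 hf.Ioi_of_Ici
  filter_upwards [hslope.eventually_const_lt hf', self_mem_nhdsWithin] with y hy hxy
  rw [slope_def_field] at hy
  exact sub_pos.1 ((div_pos_iff_of_pos_right (sub_pos.2 hxy)).1 hy)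

lemma g_zero : g 0 = 0 := by
  simp [g, pi_ne_zero]

lemma g_nonneg (z : ℝ) : 0 ≤ g z := arccos_nonneg _

lemma g_le_self {z : ℝ} (h0 : 0 ≤ z) (hπ : z ≤ π) : g z ≤ z :=
  calc g z ≤ arccos (cos z) := by
        refine arccos_le_arccos ?_
        rw [le_div_iff₀ pi_pos]
        nlinarith [mul_cos_le_sin h0 hπ]
    _ = z := arccos_cos h0 hπ

lemma self_sub_sq_le_g {z : ℝ} (h0 : 0 ≤ z) (h1 : z ≤ 1) : z - z ^ 2 ≤ g z := by
  have hπ := pi_gt_three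
  have hcos : 1 - z ^ 2 / 2 ≤ cos z := one_sub_sq_div_two_le_cos
  have hcos_upper : cos z - (1 - z ^ 2 / 2) ≤ z ^ 4 * (5 / 96) := by
    simpa [abs_of_nonneg h0] using (abs_le.1 (cos_bound (x := z) (by rwa [abs_of_nonneg h0]))).2
  have hy : -1 ≤ ((π - z) * cos z + sin z) / π := by
    rw [le_div_iff₀ pi_pos]
    nlinarith [sin_nonneg_of_nonneg_of_le_pi h0 (by linarith),
      mul_nonneg (sub_nonneg.2 (show z ≤ π by linarith))
        (show (0 : ℝ) ≤ 1 - z ^ 2 / 2 by nlinarith)]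
  have hsq : (z - z ^ 2) ^ 2 ≤ g z ^ 2 := by
    refine le_trans ?_ (two_mul_one_sub_le_arccos_sq hy)
    rw [one_sub_div pi_ne_zero, mul_div_assoc', le_div_iff₀ pi_pos]
    have hz4 : z ^ 4 ≤ z ^ 3 := pow_le_pow_of_le_one h0 h1 (by norm_num)
    nlinarith [sin_le h0, mul_nonneg h0 (sq_nonneg z), mul_le_mul_of_nonneg_left hcos h0]
  exact (pow_le_pow_iff_left₀ (by nlinarith) (g_nonneg z) two_ne_zero).1 hsq

lemma hasDerivWithinAt_g_zero : HasDerivWithinAt g 1 (Ici 0) 0 := by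
  rw [hasDerivWithinAt_iff_tendsto_slope, Ici_sdiff_left]
  have hlower : Tendsto (fun z : ℝ => 1 - z) (𝓝[>] 0) (𝓝 1) := by
    simpa using ((tendsto_id (x := 𝓝 (0 : ℝ))).const_sub 1).mono_left nhdsWithin_le_nhds
  refine tendsto_of_tendsto_of_tendsto_of_le_of_le' hlower tendsto_const_nhds ?_ ?_ <;>
    filter_upwards [Ioo_mem_nhdsGT one_pos] with z ⟨h0, h1⟩ <;>
    rw [slope_def_field, g_zero, sub_zero, sub_zero]
  · rw [le_div_iff₀ h0]
    nlinarith [self_sub_sq_le_g h0.le h1.le]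
  · rw [div_le_one h0]
    exact g_le_self h0.le (by linarith [pi_gt_three])

lemma iterate_g_zero (l : ℕ) : g^[l] 0 = 0 := Function.iterate_fixed g_zero l

lemma hasDerivWithinAt_iterate_g_zero (l : ℕ) : HasDerivWithinAt g^[l] 1 (Ici 0) 0 := by
  simpa using hasDerivWithinAt_g_zero.iterate _ g_zero (fun z _ => g_nonneg z) l

lemma F_zero_left (θ : ℝ) : F 0 θ = cos θ := by
  simp [F]

lemma F_zero_right (L : ℕ) : F L 0 = 1 := by
  have hL : (L : ℝ) + 1 ≠ 0 := by positivity
  simp [F, iterate_g_zero, hL]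

lemma hasDerivWithinAt_F_zero (L : ℕ) : HasDerivWithinAt (F L) (-L / (2 * π)) (Ici 0) 0 := by
  have hfactor (l' : ℕ) : HasDerivWithinAt (fun θ => 1 - g^[l'] θ / π) (-(1 / π)) (Ici 0) 0 := by
    simpa using ((hasDerivWithinAt_iterate_g_zero l').div_const π).const_sub 1
  have hprod (l : ℕ) : HasDerivWithinAt (fun θ => ∏ l' ∈ Finset.Ico l L, (1 - g^[l'] θ / π))
      (-(Finset.Ico l L).card / π) (Ici 0) 0 :=
    (HasDerivWithinAt.fun_finsetProd fun l' _ => hfactor l').congr_deriv (by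
      simp [iterate_g_zero, div_eq_mul_inv])
  have hterm (l : ℕ) : HasDerivWithinAt
      (fun θ => cos (g^[l] θ) * ∏ l' ∈ Finset.Ico l L, (1 - g^[l'] θ / π))
      (-(Finset.Ico l L).card / π) (Ici 0) 0 :=
    ((hasDerivWithinAt_iterate_g_zero l).cos.fun_mul (hprod l)).congr_deriv (by
      simp [iterate_g_zero])
  refine ((HasDerivWithinAt.fun_sum fun l _ => hterm l).const_mul
    (1 / ((L : ℝ) + 1))).congr_deriv ?_
  have hgauss : (∑ l ∈ Finset.range (L + 1), ((Finset.Ico l L).card : ℝ)) * 2 = L * (L + 1) := by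
    exact_mod_cast Finset.sum_range_succ_card_Ico L
  rw [← Finset.sum_div, Finset.sum_neg_distrib]
  field_simp
  linear_combination -hgauss

lemma eventually_F_pos (L : ℕ) : ∀ᶠ θ in 𝓝[>] 0, 0 < F L θ :=
  ((hasDerivWithinAt_F_zero L).continuousWithinAt.mono Ioi_subset_Ici_self).eventually_const_lt
    (by rw [F_zero_right]; exact one_pos)

lemma eventually_F_lt_F {L₁ L₂ : ℕ} (h : L₂ < L₁) : ∀ᶠ θ in 𝓝[>] 0, F L₁ θ < F L₂ θ := by
  have hderiv : 0 < -(L₂ : ℝ) / (2 * π) - -L₁ / (2 * π) := by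
    rw [← sub_div]
    exact div_pos (by simpa using h) (by positivity)
  have hdiff := (hasDerivWithinAt_F_zero L₂).sub (hasDerivWithinAt_F_zero L₁)
  filter_upwards [hdiff.eventually_nhdsGT_lt hderiv] with θ hθ
  simpa [F_zero_right] using hθ

lemma eventually_sq_F_lt_sq_F {L₁ L₂ : ℕ} (h : L₂ < L₁) :
    ∀ᶠ θ in 𝓝[>] 0, F L₁ θ ^ 2 < F L₂ θ ^ 2 := by
  filter_upwards [eventually_F_pos L₁, eventually_F_lt_F h] with θ hpos hlt
  exact pow_lt_pow_left₀ hlt hpos.le two_ne_zero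

lemma eventually_cos_sq_lt_one : ∀ᶠ θ in 𝓝[>] 0, cos θ ^ 2 < 1 := by
  filter_upwards [Ioo_mem_nhdsGT pi_pos] with θ ⟨h0, hπ⟩
  rw [cos_sq']
  linarith [pow_pos (sin_pos_of_pos_of_lt_pi h0 hπ) 2]

namespace Matrix

variable {a b c c₁ c₂ : ℝ}

lemma posDef_fin_two_of_sq_lt (ha : 0 < a) (hc : c ^ 2 < a * b) : (!![a, c; c, b]).PosDef := by
  refine PosDef.of_dotProduct_mulVec_pos ?_ fun x hx => ?_
  · ext i j
    fin_cases i <;> fin_cases j <;> simp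
  · simp only [star_trivial, dotProduct, mulVec, Fin.sum_univ_two, of_apply, cons_val',
      cons_val_zero, cons_val_one, empty_val', cons_val_fin_one]
    have hsq : 0 < (a * x 0 + c * x 1) ^ 2 + (a * b - c ^ 2) * x 1 ^ 2 := by
      rcases eq_or_ne (x 1) 0 with h1 | h1
      · have h0 : x 0 ≠ 0 := fun h0 => hx (by ext i; fin_cases i <;> simp [h0, h1])
        have : 0 < (a * x 0) ^ 2 := by positivity
        simpa [h1] using this
      · have := sub_pos.2 hc
        positivity
    refine pos_of_mul_pos_right (a := a) ?_ ha.le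
    linear_combination hsq

lemma spectrum_fin_two_symm (a b c : ℝ) :
    spectrum ℝ !![a, c; c, b] =
      {(a + b - √((a - b) ^ 2 + 4 * c ^ 2)) / 2, (a + b + √((a - b) ^ 2 + 4 * c ^ 2)) / 2} := by
  have hdisc : √((a - b) ^ 2 + 4 * c ^ 2) ^ 2 = (a - b) ^ 2 + 4 * c ^ 2 := sq_sqrt (by positivity)
  have hdet (x : ℝ) : (algebraMap ℝ (Matrix (Fin 2) (Fin 2) ℝ) x - !![a, c; c, b]).det
      = (x - (a + b - √((a - b) ^ 2 + 4 * c ^ 2)) / 2)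
        * (x - (a + b + √((a - b) ^ 2 + 4 * c ^ 2)) / 2) := by
    have hshift : algebraMap ℝ (Matrix (Fin 2) (Fin 2) ℝ) x - !![a, c; c, b]
        = !![x - a, -c; -c, x - b] := by
      ext i j
      fin_cases i <;> fin_cases j <;> simp [algebraMap_eq_diagonal]
    rw [hshift, det_fin_two_of]
    linear_combination hdisc / 4
  ext x
  rw [spectrum.mem_iff, isUnit_iff_isUnit_det, isUnit_iff_ne_zero, not_not, hdet, mul_eq_zero,
    sub_eq_zero, sub_eq_zero]
  rfl

lemma sSup_spectrum_fin_two_symm (a b c : ℝ) :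
    sSup (spectrum ℝ !![a, c; c, b]) = (a + b + √((a - b) ^ 2 + 4 * c ^ 2)) / 2 := by
  rw [spectrum_fin_two_symm, csSup_pair, max_eq_right]
  linarith [sqrt_nonneg ((a - b) ^ 2 + 4 * c ^ 2)]

lemma sInf_spectrum_fin_two_symm (a b c : ℝ) :
    sInf (spectrum ℝ !![a, c; c, b]) = (a + b - √((a - b) ^ 2 + 4 * c ^ 2)) / 2 := by
  rw [spectrum_fin_two_symm, csInf_pair, min_eq_left]
  linarith [sqrt_nonneg ((a - b) ^ 2 + 4 * c ^ 2)]

lemma sInf_spectrum_fin_two_symm_le_sSup :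
    sInf (spectrum ℝ !![a, c; c, b]) ≤ sSup (spectrum ℝ !![a, c; c, b]) := by
  rw [sSup_spectrum_fin_two_symm, sInf_spectrum_fin_two_symm]
  linarith [sqrt_nonneg ((a - b) ^ 2 + 4 * c ^ 2)]

lemma sqrt_discr_lt_sqrt_discr (h : c₁ ^ 2 < c₂ ^ 2) :
    √((a - b) ^ 2 + 4 * c₁ ^ 2) < √((a - b) ^ 2 + 4 * c₂ ^ 2) :=
  sqrt_lt_sqrt (by positivity) (by linarith)

lemma sSup_spectrum_fin_two_symm_lt (h : c₁ ^ 2 < c₂ ^ 2) :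
    sSup (spectrum ℝ !![a, c₁; c₁, b]) < sSup (spectrum ℝ !![a, c₂; c₂, b]) := by
  rw [sSup_spectrum_fin_two_symm, sSup_spectrum_fin_two_symm]
  linarith [sqrt_discr_lt_sqrt_discr (a := a) (b := b) h]

lemma sInf_spectrum_fin_two_symm_lt (h : c₁ ^ 2 < c₂ ^ 2) :
    sInf (spectrum ℝ !![a, c₂; c₂, b]) < sInf (spectrum ℝ !![a, c₁; c₁, b]) := by
  rw [sInf_spectrum_fin_two_symm, sInf_spectrum_fin_two_symm]
  linarith [sqrt_discr_lt_sqrt_discr (a := a) (b := b) h]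

lemma sSup_div_sInf_spectrum_fin_two_symm_lt (ha : 0 < a) (h : c₁ ^ 2 < c₂ ^ 2)
    (hc₂ : c₂ ^ 2 < a * b) :
    sSup (spectrum ℝ !![a, c₁; c₁, b]) / sInf (spectrum ℝ !![a, c₁; c₁, b]) <
      sSup (spectrum ℝ !![a, c₂; c₂, b]) / sInf (spectrum ℝ !![a, c₂; c₂, b]) := by
  have hb : 0 < b := pos_of_mul_pos_right ((sq_nonneg c₂).trans_lt hc₂) ha.le
  have hlt := sqrt_discr_lt_sqrt_discr (a := a) (b := b) h
  have hlt_add : √((a - b) ^ 2 + 4 * c₂ ^ 2) < a + b := by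
    rw [sqrt_lt' (by positivity)]
    linarith
  simp only [sSup_spectrum_fin_two_symm, sInf_spectrum_fin_two_symm]
  rw [div_lt_div_iff₀ (by linarith) (by linarith)]
  nlinarith [sqrt_nonneg ((a - b) ^ 2 + 4 * c₁ ^ 2)]

end Matrix

theorem deep_relu_ntk_better_conditioning_general
    {d : ℕ}
    (x₁ x₂ : EuclideanSpace ℝ (Fin d)) (hx₁ : x₁ ≠ 0) (hx₂ : x₂ ≠ 0)
    (a b : ℝ) (ha : a = ‖x₁‖ ^ 2) (hb : b = ‖x₂‖ ^ 2)
    (G : ℝ → Matrix (Fin 2) (Fin 2) ℝ) (K : ℕ → ℝ → Matrix (Fin 2) (Fin 2) ℝ)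
    (hG : ∀ θ, G θ = !![a, Real.sqrt (a * b) * Real.cos θ;
                        Real.sqrt (a * b) * Real.cos θ, b])
    (hK : ∀ L θ, K L θ = !![a, Real.sqrt (a * b) * F L θ;
                            Real.sqrt (a * b) * F L θ, b]) :
    (∀ L₁ L₂ : ℕ, 1 ≤ L₂ → L₂ < L₁ →
      ∃ δ > 0, ∀ θ ∈ Set.Ioo (0 : ℝ) δ,
        (G θ).PosDef ∧ (K L₂ θ).PosDef ∧ (K L₁ θ).PosDef ∧
        sSup (spectrum ℝ (K L₁ θ)) / sInf (spectrum ℝ (K L₁ θ)) <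
          sSup (spectrum ℝ (K L₂ θ)) / sInf (spectrum ℝ (K L₂ θ)) ∧
        sSup (spectrum ℝ (K L₂ θ)) / sInf (spectrum ℝ (K L₂ θ)) <
          sSup (spectrum ℝ (G θ)) / sInf (spectrum ℝ (G θ))) ∧
    (∀ L : ℕ, 1 ≤ L →
      ∃ δ > 0, ∀ θ ∈ Set.Ioo (0 : ℝ) δ,
        sSup (spectrum ℝ (K L θ)) < sSup (spectrum ℝ (G θ)) ∧
        sInf (spectrum ℝ (K L θ)) ≤ sSup (spectrum ℝ (K L θ)) ∧
        sInf (spectrum ℝ (G θ)) < sInf (spectrum ℝ (K L θ))) := by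
  have ha₀ : 0 < a := ha ▸ pow_pos (norm_pos_iff.2 hx₁) 2
  have hab : 0 < a * b := mul_pos ha₀ (hb ▸ pow_pos (norm_pos_iff.2 hx₂) 2)
  have hscale {x y : ℝ} (h : x ^ 2 < y ^ 2) : (√(a * b) * x) ^ 2 < (√(a * b) * y) ^ 2 := by
    rw [mul_pow, mul_pow, sq_sqrt hab.le]
    exact mul_lt_mul_of_pos_left h hab
  have hbound {x : ℝ} (h : x ^ 2 < 1) : (√(a * b) * x) ^ 2 < a * b := by
    simpa [sq_sqrt hab.le] using hscale (y := 1) (by simpa using h)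
  refine ⟨fun L₁ L₂ hL₂ hL => mem_nhdsGT_iff_exists_Ioo_subset.1 ?_,
    fun L hL => mem_nhdsGT_iff_exists_Ioo_subset.1 ?_⟩
  · filter_upwards [eventually_sq_F_lt_sq_F hL, eventually_sq_F_lt_sq_F (L₂ := 0) hL₂,
      eventually_cos_sq_lt_one] with θ h₁₂ h₂ hcos
    rw [F_zero_left] at h₂
    simp only [hG, hK]
    exact ⟨posDef_fin_two_of_sq_lt ha₀ (hbound hcos),
      posDef_fin_two_of_sq_lt ha₀ (hbound (h₂.trans hcos)),
      posDef_fin_two_of_sq_lt ha₀ (hbound ((h₁₂.trans h₂).trans hcos)),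
      sSup_div_sInf_spectrum_fin_two_symm_lt ha₀ (hscale h₁₂) (hbound (h₂.trans hcos)),
      sSup_div_sInf_spectrum_fin_two_symm_lt ha₀ (hscale h₂) (hbound hcos)⟩
  · filter_upwards [eventually_sq_F_lt_sq_F (L₂ := 0) hL] with θ h
    rw [F_zero_left] at h
    simp only [hG, hK]
    exact ⟨sSup_spectrum_fin_two_symm_lt (hscale h), sInf_spectrum_fin_two_symm_le_sSup,
      sInf_spectrum_fin_two_symm_lt (hscale h)⟩

/-- Theorem 5.2 of the paper. For a two-point dataset `{x₁, x₂}` of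
nonzero vectors with `a = ‖x₁‖²`, `b = ‖x₂‖²`, let `G θ` be the 2×2 Gram matrix (with
off-diagonal `√(ab)·cos θ`) and `K L θ` the normalized infinite-width NTK matrix of the
depth-`L` ReLU network (with off-diagonal `√(ab)·F L θ`). Then for all `L₁ > L₂ ≥ 1`
there is `δ > 0` such that for every input angle `θ ∈ (0, δ)` the three matrices are
positive definite with condition numbers (ratios `λ_max/λ_min = sSup/sInf` of the
spectrum) satisfying `κ(K L₁ θ) < κ(K L₂ θ) < κ(G θ)`; moreover, for each `L ≥ 1` there
is `δ > 0` such that for `θ ∈ (0, δ)` the eigenvalues interlace as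
`λ_max(G θ) > λ_max(K L θ) ≥ λ_min(K L θ) > λ_min(G θ)`. -/
theorem deep_relu_ntk_better_conditioning
    {d : ℕ} (hd : 0 < d)
    (x₁ x₂ : EuclideanSpace ℝ (Fin d)) (hx₁ : x₁ ≠ 0) (hx₂ : x₂ ≠ 0)
    (a b : ℝ) (ha : a = ‖x₁‖ ^ 2) (hb : b = ‖x₂‖ ^ 2)
    (G : ℝ → Matrix (Fin 2) (Fin 2) ℝ) (K : ℕ → ℝ → Matrix (Fin 2) (Fin 2) ℝ)
    (hG : ∀ θ, G θ = !![a, Real.sqrt (a * b) * Real.cos θ;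
                        Real.sqrt (a * b) * Real.cos θ, b])
    (hK : ∀ L θ, K L θ = !![a, Real.sqrt (a * b) * F L θ;
                            Real.sqrt (a * b) * F L θ, b]) :
    (∀ L₁ L₂ : ℕ, 1 ≤ L₂ → L₂ < L₁ →
      ∃ δ > 0, ∀ θ ∈ Set.Ioo (0 : ℝ) δ,
        (G θ).PosDef ∧ (K L₂ θ).PosDef ∧ (K L₁ θ).PosDef ∧
        sSup (spectrum ℝ (K L₁ θ)) / sInf (spectrum ℝ (K L₁ θ)) <
          sSup (spectrum ℝ (K L₂ θ)) / sInf (spectrum ℝ (K L₂ θ)) ∧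
        sSup (spectrum ℝ (K L₂ θ)) / sInf (spectrum ℝ (K L₂ θ)) <
          sSup (spectrum ℝ (G θ)) / sInf (spectrum ℝ (G θ))) ∧
    (∀ L : ℕ, 1 ≤ L →
      ∃ δ > 0, ∀ θ ∈ Set.Ioo (0 : ℝ) δ,
        sSup (spectrum ℝ (K L θ)) < sSup (spectrum ℝ (G θ)) ∧
        sInf (spectrum ℝ (K L θ)) ≤ sSup (spectrum ℝ (K L θ)) ∧
        sInf (spectrum ℝ (G θ)) < sInf (spectrum ℝ (K L θ))) :=
  deep_relu_ntk_better_conditioning_general x₁ x₂ hx₁ hx₂ a b ha hb G K hG hK
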